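/- arXiv:2602.06788 — 7 statements merged into one kernel-verified Lean document; each statement's English description precedes it below -/
import Mathlib

section
/- Let f : [0,∞) → ℝ be continuous on [0,∞) and continuously differentiable on (0,∞). Suppose that the ratio (f(t) − f(0))/t is not bounded from below in any right neighborhood of 0, i.e., for every a > 0 and every M ∈ ℝ there exists t ∈ (0,a) with (f(t) − f(0))/t < M. Then for every n ≥ 1, every r ∈ ℝⁿ, every q ∈ Δⁿ with qᵢ > 0 for all i, and every β > 0, every maximizer p of g(p) = Σᵢ rᵢ pᵢ − β Σᵢ qᵢ f(pᵢ/qᵢ) over Δⁿ satisfies pᵢ > 0 for all i ∈ {1,…,n}. -/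
open Finset

/-- The probability simplex Δⁿ in ℝⁿ (indexed by `Fin n`). -/
def simplex (n : ℕ) : Set (Fin n → ℝ) :=
  {p | (∀ i, 0 ≤ p i) ∧ ∑ i, p i = 1}

/-- The objective `g(p) = Σᵢ rᵢ pᵢ − β Σᵢ qᵢ f(pᵢ/qᵢ)`. -/
noncomputable def obj (n : ℕ) (r q : Fin n → ℝ) (β : ℝ) (f : ℝ → ℝ)
    (p : Fin n → ℝ) : ℝ :=
  (∑ i, r i * p i) - β * ∑ i, q i * f (p i / q i)

/-!
If `p i = 0`, move the mass `ε = q i * t` from a coordinate `j` with `p j > 0` to `i`. Writing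
`s = p j / q j > 0`, the objective changes by
`(r i - r j) ε - β (q i (f t - f 0) + q j (f (s - ε / q j) - f s))`.
Differentiability of `f` at `s` bounds the last term by `O(ε)`, while along some
`t → 0⁺` the slope `(f t - f 0) / t` drops below any `M`, so for such `t` the change is positive.
-/

open Filter Topology

section Transfer

variable {ι : Type*} [DecidableEq ι]

def transfer (p : ι → ℝ) (i j : ι) (ε : ℝ) : ι → ℝ :=
  p + Pi.single i ε - Pi.single j ε

theorem transfer_apply_left (p : ι → ℝ) {i j : ι} (hij : i ≠ j) (ε : ℝ) :
    transfer p i j ε i = p i + ε := by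
  simp [transfer, hij]

theorem transfer_apply_right (p : ι → ℝ) {i j : ι} (hij : i ≠ j) (ε : ℝ) :
    transfer p i j ε j = p j - ε := by
  simp [transfer, hij.symm]

theorem transfer_apply_of_ne (p : ι → ℝ) {i j k : ι} (hki : k ≠ i) (hkj : k ≠ j) (ε : ℝ) :
    transfer p i j ε k = p k := by
  simp [transfer, hki, hkj]

theorem sum_transfer_sub [Fintype ι] (φ : ι → ℝ → ℝ) (p : ι → ℝ) {i j : ι}
    (hij : i ≠ j) (ε : ℝ) :
    ∑ k, φ k (transfer p i j ε k) - ∑ k, φ k (p k)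
      = (φ i (p i + ε) - φ i (p i)) + (φ j (p j - ε) - φ j (p j)) := by
  rw [← Finset.sum_sub_distrib, Fintype.sum_eq_add i j hij,
    transfer_apply_left p hij, transfer_apply_right p hij]
  rintro k ⟨hki, hkj⟩
  rw [transfer_apply_of_ne p hki hkj, sub_self]

end Transfer

theorem transfer_mem_simplex {n : ℕ} {p : Fin n → ℝ} (hp : p ∈ simplex n) {i j : Fin n}
    (hij : i ≠ j) {ε : ℝ} (hε : 0 ≤ ε) (hεj : ε ≤ p j) : transfer p i j ε ∈ simplex n := by
  refine ⟨fun k ↦ ?_, ?_⟩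
  · rcases eq_or_ne k i with rfl | hki
    · rw [transfer_apply_left p hij]; linarith [hp.1 k]
    rcases eq_or_ne k j with rfl | hkj
    · rw [transfer_apply_right p hij]; linarith
    · rw [transfer_apply_of_ne p hki hkj]; exact hp.1 k
  · have := sum_transfer_sub (fun _ x ↦ x) p hij ε
    linarith [hp.2]

theorem obj_eq_sum (n : ℕ) (r q : Fin n → ℝ) (β : ℝ) (f : ℝ → ℝ) (p : Fin n → ℝ) :
    obj n r q β f p = ∑ k, (r k * p k - β * (q k * f (p k / q k))) := by
  rw [obj, Finset.sum_sub_distrib, Finset.mul_sum]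

theorem obj_transfer_sub {n : ℕ} (r q : Fin n → ℝ) (β : ℝ) (f : ℝ → ℝ) (p : Fin n → ℝ)
    {i j : Fin n} (hij : i ≠ j) (ε : ℝ) :
    obj n r q β f (transfer p i j ε) - obj n r q β f p
      = (r i - r j) * ε - β * (q i * (f ((p i + ε) / q i) - f (p i / q i))
          + q j * (f ((p j - ε) / q j) - f (p j / q j))) := by
  rw [obj_eq_sum, obj_eq_sum,
    sum_transfer_sub (fun k x ↦ r k * x - β * (q k * f (x / q k))) p hij]
  ring

theorem exists_pos_of_mem_simplex {n : ℕ} {p : Fin n → ℝ} (hp : p ∈ simplex n) :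
    ∃ j, 0 < p j := by
  obtain ⟨j, -, hj⟩ := Finset.exists_lt_of_sum_lt (f := 0) (s := univ) (by rw [hp.2]; simp)
  exact ⟨j, hj⟩

theorem HasDerivAt.eventually_sub_lt {f : ℝ → ℝ} {f' s K : ℝ} (hf : HasDerivAt f f' s)
    (hK : -f' < K) : ∀ᶠ δ in 𝓝[>] 0, f (s - δ) - f s < K * δ := by
  have hslope := (hf.tendsto_slope_zero_left.comp tendsto_neg_nhdsGT_neg).eventually
    (lt_mem_nhds (neg_lt.mp hK))
  rw [neg_zero] at hslope
  filter_upwards [hslope, self_mem_nhdsWithin] with δ hδ (hδ0 : 0 < δ)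
  simp only [Function.comp_apply, smul_eq_mul, ← sub_eq_add_neg] at hδ
  rw [inv_neg, neg_mul, neg_lt_neg_iff, inv_mul_lt_iff₀ hδ0] at hδ
  linarith

theorem frequently_div_lt_of_forall_exists {f : ℝ → ℝ}
    (hratio : ∀ a > (0 : ℝ), ∀ M : ℝ, ∃ t : ℝ, 0 < t ∧ t < a ∧ (f t - f 0) / t < M) (M : ℝ) :
    ∃ᶠ t in 𝓝[>] 0, (f t - f 0) / t < M :=
  (nhdsGT_basis 0).frequently_iff.mpr fun a ha ↦
    let ⟨t, ht0, hta, ht⟩ := hratio a ha M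
    ⟨t, ⟨ht0, hta⟩, ht⟩

theorem exists_obj_gt_of_eq_zero {f : ℝ → ℝ}
    (hratio : ∀ M, ∃ᶠ t in 𝓝[>] 0, (f t - f 0) / t < M)
    {n : ℕ} (r : Fin n → ℝ) {q : Fin n → ℝ} (hq_pos : ∀ i, 0 < q i) {β : ℝ} (hβ : 0 < β)
    {p : Fin n → ℝ} (hp : p ∈ simplex n) {i j : Fin n} (hpi : p i = 0) (hpj : 0 < p j)
    (hf : DifferentiableAt ℝ f (p j / q j)) :
    ∃ p' ∈ simplex n, obj n r q β f p < obj n r q β f p' := by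
  have hij : i ≠ j := by rintro rfl; linarith
  have hqi := hq_pos i
  have hqj := hq_pos j
  set s := p j / q j
  set K := -deriv f s + 1
  have hnear : ∀ᶠ t in 𝓝[>] 0, f (s - q i / q j * t) - f s < K * (q i / q j * t) :=
    eventually_nhdsGT_zero_mul_left (div_pos hqi hqj)
      (hf.hasDerivAt.eventually_sub_lt (lt_add_one _))
  obtain ⟨t, hslope, hnear_t, ht0, hsmall⟩ := ((hratio ((r i - r j) / β - K)).and_eventually
    (hnear.and (Ioo_mem_nhdsGT (div_pos hpj hqi)))).exists
  rw [lt_div_iff₀ hqi, mul_comm] at hsmall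
  refine ⟨transfer p i j (q i * t), transfer_mem_simplex hp hij (by positivity) hsmall.le, ?_⟩
  have hj : (p j - q i * t) / q j = s - q i / q j * t := by
    rw [sub_div, div_mul_eq_mul_div]
  rw [← sub_pos, obj_transfer_sub r q β f p hij, hpi, zero_add, zero_div,
    mul_div_cancel_left₀ _ hqi.ne', hj]
  rw [div_lt_iff₀ ht0] at hslope
  have hnear' : q j * (f (s - q i / q j * t) - f s) < K * (q i * t) := by
    calc _ < q j * (K * (q i / q j * t)) := mul_lt_mul_of_pos_left hnear_t hqj
      _ = K * (q i * t) := by field_simp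
  have hsum : q i * (f t - f 0) + q j * (f (s - q i / q j * t) - f s)
      < (r i - r j) / β * (q i * t) := by
    linarith [mul_lt_mul_of_pos_left hslope hqi]
  have := mul_lt_mul_of_pos_left hsum hβ
  rw [← mul_assoc, mul_div_cancel₀ _ hβ.ne'] at this
  linarith

theorem stmt1_general (f : ℝ → ℝ)
    (hf_diff : ∀ t ∈ Set.Ioi (0 : ℝ), DifferentiableAt ℝ f t)
    (hratio : ∀ a > (0 : ℝ), ∀ M : ℝ, ∃ t : ℝ, 0 < t ∧ t < a ∧ (f t - f 0) / t < M)
    (n : ℕ) (r q : Fin n → ℝ)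
    (hq_pos : ∀ i, 0 < q i)
    (β : ℝ) (hβ : 0 < β)
    (p : Fin n → ℝ) (hp : p ∈ simplex n)
    (hmax : ∀ p' ∈ simplex n, obj n r q β f p' ≤ obj n r q β f p) :
    ∀ i, 0 < p i := by
  intro i
  by_contra! hpi
  obtain ⟨j, hpj⟩ := exists_pos_of_mem_simplex hp
  obtain ⟨p', hp', hlt⟩ := exists_obj_gt_of_eq_zero (frequently_div_lt_of_forall_exists hratio)
    r hq_pos hβ hp (le_antisymm hpi (hp.1 i)) hpj (hf_diff _ (div_pos hpj (hq_pos j)))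
  exact (hmax p' hp').not_gt hlt

/-- if the ratio `(f(t) − f(0))/t` is not bounded from below in any
right neighborhood of `0`, then every maximizer of `g` over the simplex has all
coordinates strictly positive. -/
theorem stmt1 (f : ℝ → ℝ)
    (hf_cont : ContinuousOn f (Set.Ici 0))
    (hf_diff : ∀ t ∈ Set.Ioi (0 : ℝ), DifferentiableAt ℝ f t)
    (hf_deriv_cont : ContinuousOn (deriv f) (Set.Ioi 0))
    (hratio : ∀ a > (0 : ℝ), ∀ M : ℝ, ∃ t : ℝ, 0 < t ∧ t < a ∧ (f t - f 0) / t < M)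
    (n : ℕ) (hn : 1 ≤ n) (r q : Fin n → ℝ)
    (hq : q ∈ simplex n) (hq_pos : ∀ i, 0 < q i)
    (β : ℝ) (hβ : 0 < β)
    (p : Fin n → ℝ) (hp : p ∈ simplex n)
    (hmax : ∀ p' ∈ simplex n, obj n r q β f p' ≤ obj n r q β f p) :
    ∀ i, 0 < p i :=
  stmt1_general f hf_diff hratio n r q hq_pos β hβ p hp hmax
end

section
/- Let f : [0,∞) → ℝ be continuous on [0,∞) and continuously differentiable on (0,∞). Suppose there exist a > 0 and M ∈ ℝ such that (f(t) − f(0))/t ≥ M for all t ∈ (0,a). Then for every integer n ≥ 2 and every β > 0, taking q ∈ Δⁿ to be the uniform distribution (qᵢ = 1/n for all i), there exists r ∈ ℝⁿ such that the first standard basis vector e₁ is a maximizer of g(p) = Σᵢ rᵢ pᵢ − β Σᵢ qᵢ f(pᵢ/qᵢ) over Δⁿ; in particular this maximizer has zero coordinates. -/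
/-!
Put `r = c • e₁`. Since `Σᵢ pᵢ = Σᵢ (e₁)ᵢ = 1`, the point `e₁` maximizes `g` as soon as, for some
multiplier `μ`, each summand of `g` increases by at most `μ (x - (e₁)ᵢ)` when its coordinate moves
from `(e₁)ᵢ` to `x ∈ [0,1]`. With `q` uniform these summands are `c x - (β/n) f(n x)` and
`-(β/n) f(n x)`, so it suffices that `f(0) - f(t) ≤ N₀ t` and `f(n) - f(t) ≤ N₁ (n - t)` on `[0,n]`;
then `μ = β N₀` and `c = β (N₀ + N₁)` work. Both one-sided bounds hold near the endpoint (by the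
hypothesis at `0`, by differentiability at `n`), and a bound near the endpoint extends to the whole
compact interval because `f` is bounded there.
-/

open Finset

/-- The first standard basis vector `e₁ = (1,0,…,0)` in ℝⁿ. -/
def e1 (n : ℕ) : Fin n → ℝ := fun i => if (i : ℕ) = 0 then 1 else 0

open Filter Topology Set

theorem ContinuousOn.exists_sub_le_mul_dist {X : Type*} [PseudoMetricSpace X] {f : X → ℝ}
    {s : Set X} {x : X} {M : ℝ} (hs : IsCompact s) (hf : ContinuousOn f s) (hx : x ∈ s)
    (hloc : ∀ᶠ y in 𝓝[s] x, f x - f y ≤ M * dist y x) :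
    ∃ N, ∀ y ∈ s, f x - f y ≤ N * dist y x := by
  obtain ⟨δ, hδ, hball⟩ := Metric.mem_nhdsWithin_iff.mp hloc
  obtain ⟨B, hB⟩ := hs.exists_bound_of_continuousOn hf
  have hB0 : 0 ≤ B := (norm_nonneg _).trans (hB x hx)
  refine ⟨max M (2 * B / δ), fun y hy => ?_⟩
  rcases lt_or_ge (dist y x) δ with hyδ | hyδ
  · calc f x - f y ≤ M * dist y x := hball ⟨hyδ, hy⟩
      _ ≤ max M (2 * B / δ) * dist y x := by gcongr; exact le_max_left _ _
  · have hfx := abs_le.mp (hB x hx)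
    have hfy := abs_le.mp (hB y hy)
    calc f x - f y ≤ 2 * B / δ * δ := by rw [div_mul_cancel₀ _ hδ.ne']; linarith
      _ ≤ max M (2 * B / δ) * dist y x := by gcongr; exact le_max_right _ _

theorem exists_eventually_sub_le_mul_dist_of_differentiableAt {f : ℝ → ℝ} {x : ℝ}
    (hf : DifferentiableAt ℝ f x) :
    ∃ C, ∀ᶠ y in 𝓝 x, f x - f y ≤ C * dist y x := by
  obtain ⟨C, hC⟩ := hf.hasDerivAt.isBigO_sub.bound
  refine ⟨C, hC.mono fun y hy => ?_⟩
  rw [Real.norm_eq_abs, Real.norm_eq_abs] at hy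
  rw [Real.dist_eq]
  linarith [neg_abs_le (f y - f x)]

theorem isMaxOn_obj_of_le_mul_sub {n : ℕ} {r q e : Fin n → ℝ} {β : ℝ} {f : ℝ → ℝ} (μ : ℝ)
    (he : ∑ i, e i = 1)
    (hμ : ∀ i, ∀ x ∈ Icc (0 : ℝ) 1, r i * x - β * (q i * f (x / q i))
      - (r i * e i - β * (q i * f (e i / q i))) ≤ μ * (x - e i)) :
    IsMaxOn (obj n r q β f) (simplex n) e := by
  rintro p ⟨hp0, hp1⟩
  have hp_le_one : ∀ i, p i ≤ 1 := fun i =>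
    hp1 ▸ Finset.single_le_sum (fun j _ => hp0 j) (Finset.mem_univ i)
  have hsum : ∑ i, (r i * p i - β * (q i * f (p i / q i))
      - (r i * e i - β * (q i * f (e i / q i)))) ≤ ∑ i, μ * (p i - e i) :=
    Finset.sum_le_sum fun i _ => hμ i (p i) ⟨hp0 i, hp_le_one i⟩
  simp only [Finset.sum_sub_distrib, ← Finset.mul_sum, hp1, he, sub_self, mul_zero] at hsum
  show obj n r q β f p ≤ obj n r q β f e
  unfold obj
  linarith

theorem e1_mem_simplex {n : ℕ} (hn : 0 < n) : e1 n ∈ simplex n := by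
  obtain ⟨m, rfl⟩ := Nat.exists_eq_add_of_lt hn
  refine ⟨fun i => by unfold e1; split_ifs <;> norm_num, ?_⟩
  simp [e1]

theorem isMaxOn_obj_e1_uniform {n : ℕ} (hn : 0 < n) {β : ℝ} (hβ : 0 ≤ β) {f : ℝ → ℝ}
    {N₀ N₁ : ℝ} (h₀ : ∀ t ∈ Icc (0 : ℝ) n, f 0 - f t ≤ N₀ * t)
    (h₁ : ∀ t ∈ Icc (0 : ℝ) n, f n - f t ≤ N₁ * (n - t)) :
    IsMaxOn (obj n (fun i => β * (N₀ + N₁) * e1 n i) (fun _ => (n : ℝ)⁻¹) β f) (simplex n)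
      (e1 n) := by
  have hn' : (0 : ℝ) < n := Nat.cast_pos.mpr hn
  refine isMaxOn_obj_of_le_mul_sub (β * N₀) (e1_mem_simplex hn).2 fun i x ⟨hx0, hx1⟩ => ?_
  have hxn : x * n ∈ Icc (0 : ℝ) n := ⟨by positivity, by nlinarith⟩
  have hβn : 0 ≤ β * (n : ℝ)⁻¹ := by positivity
  have hinv : (n : ℝ)⁻¹ * n = 1 := inv_mul_cancel₀ hn'.ne'
  unfold e1
  split_ifs <;> simp only [div_inv_eq_mul, one_mul, zero_mul]
  · linear_combination mul_le_mul_of_nonneg_left (h₁ _ hxn) hβn + β * N₁ * (1 - x) * hinv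
  · linear_combination mul_le_mul_of_nonneg_left (h₀ _ hxn) hβn + β * N₀ * x * hinv

theorem stmt2_general (f : ℝ → ℝ)
    (hf_cont : ContinuousOn f (Set.Ici 0))
    (hf_diff : ∀ t ∈ Set.Ioi (0 : ℝ), DifferentiableAt ℝ f t)
    (hbound : ∃ a > (0 : ℝ), ∃ M : ℝ, ∀ t : ℝ, 0 < t → t < a → M ≤ (f t - f 0) / t)
    (n : ℕ) (hn : 2 ≤ n) (β : ℝ) (hβ : 0 < β) :
    ∃ r : Fin n → ℝ,
      e1 n ∈ simplex n ∧
      (∀ p' ∈ simplex n,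
        obj n r (fun _ => (n : ℝ)⁻¹) β f p' ≤ obj n r (fun _ => (n : ℝ)⁻¹) β f (e1 n)) ∧
      ∃ i : Fin n, e1 n i = 0 := by
  obtain ⟨a, ha, M, hM⟩ := hbound
  have hn' : (0 : ℝ) < n := Nat.cast_pos.mpr (by omega)
  have hS : IsCompact (Icc (0 : ℝ) n) := isCompact_Icc
  have hfS : ContinuousOn f (Icc 0 n) := hf_cont.mono Icc_subset_Ici_self
  have near_zero : ∀ᶠ t in 𝓝[Icc (0 : ℝ) n] 0, f 0 - f t ≤ -M * dist t 0 := by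
    filter_upwards [self_mem_nhdsWithin, nhdsWithin_le_nhds (Iio_mem_nhds ha)] with t ht hta
    rcases ht.1.eq_or_lt with rfl | htpos
    · simp
    · rw [Real.dist_0_eq_abs, abs_of_pos htpos]
      linarith [(le_div_iff₀ htpos).1 (hM t htpos hta)]
  obtain ⟨C, near_n⟩ := 
    exists_eventually_sub_le_mul_dist_of_differentiableAt (hf_diff n hn')
  obtain ⟨N₀, hN₀⟩ := hfS.exists_sub_le_mul_dist hS (left_mem_Icc.2 hn'.le) near_zero
  obtain ⟨N₁, hN₁⟩ := hfS.exists_sub_le_mul_dist hS (right_mem_Icc.2 hn'.le)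
    (nhdsWithin_le_nhds near_n)
  refine ⟨_, e1_mem_simplex (by omega),
    isMaxOn_obj_e1_uniform (N₀ := N₀) (N₁ := N₁) (by omega) hβ.le (fun t ht => ?_) (fun t ht => ?_),
    ⟨1, by omega⟩, by simp [e1]⟩
  · simpa [Real.dist_0_eq_abs, abs_of_nonneg ht.1] using hN₀ t ht
  · simpa [Real.dist_eq, abs_of_nonpos (sub_nonpos.2 ht.2)] using hN₁ t ht

/-- if the ratio `(f(t) − f(0))/t` is bounded from below on some
right neighborhood `(0,a)` of `0`, then for every `n ≥ 2` and `β > 0`, with `q`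
the uniform distribution, there is a reward vector `r` for which `e₁` is a
maximizer of `g` over the simplex; in particular this maximizer has a zero
coordinate. -/
theorem stmt2 (f : ℝ → ℝ)
    (hf_cont : ContinuousOn f (Set.Ici 0))
    (hf_diff : ∀ t ∈ Set.Ioi (0 : ℝ), DifferentiableAt ℝ f t)
    (hf_deriv_cont : ContinuousOn (deriv f) (Set.Ioi 0))
    (hbound : ∃ a > (0 : ℝ), ∃ M : ℝ, ∀ t : ℝ, 0 < t → t < a → M ≤ (f t - f 0) / t)
    (n : ℕ) (hn : 2 ≤ n) (β : ℝ) (hβ : 0 < β) :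
    ∃ r : Fin n → ℝ,
      e1 n ∈ simplex n ∧
      (∀ p' ∈ simplex n,
        obj n r (fun _ => (n : ℝ)⁻¹) β f p' ≤ obj n r (fun _ => (n : ℝ)⁻¹) β f (e1 n)) ∧
      ∃ i : Fin n, e1 n i = 0 :=
  stmt2_general f hf_cont hf_diff hbound n hn β hβ
end

section
/- Let f : [0,∞) → ℝ be continuous on [0,∞) and continuously differentiable on (0,∞), and suppose the limit L = lim_{t→0⁺} f'(t) exists in the extended reals [−∞,+∞] with L ≠ −∞. Then there exist n ≥ 2, r ∈ ℝⁿ, q ∈ Δⁿ with qᵢ > 0 for all i, and β > 0 such that some maximizer p of g(p) = Σᵢ rᵢ pᵢ − β Σᵢ qᵢ f(pᵢ/qᵢ) over Δⁿ has pᵢ = 0 for some coordinate i. -/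
open Finset Filter

/-!
A maximizer with a zero coordinate exists as soon as `f` cannot drop faster than linearly away
from `0` and from `2`: then `f 0 + f 2 - f (2 s) - f (2 - 2 s) ≤ 2 K s` on `[0, 1]`, and for
`q = (1/2, 1/2)`, `β = 1` and the reward `r = (K, 0)` the vertex `(1, 0)` maximizes `g`, since
moving mass `s` to the second coordinate loses `K s` in reward and gains at most as much in
the penalty term. Near `0` the linear bound comes from the lower bound `f' > c` that `L ≠ −∞`
provides, near `2` from differentiability, and elsewhere from boundedness of `f` on `[0, 2]`.
-/

theorem EReal.exists_eventually_real_lt_of_tendsto {α : Type*} {l : Filter α} {g : α → ℝ}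
    {L : EReal} (hL : L ≠ ⊥) (hg : Tendsto (fun a => (g a : EReal)) l (nhds L)) :
    ∃ c : ℝ, ∀ᶠ a in l, c < g a := by
  obtain ⟨c, -, hcL⟩ := EReal.lt_iff_exists_real_btwn.mp (Ne.bot_lt hL)
  exact ⟨c, (hg.eventually_const_lt hcL).mono fun _ h => EReal.coe_lt_coe_iff.mp h⟩

theorem DifferentiableAt.exists_eventually_sub_le_mul_abs {f : ℝ → ℝ} {x : ℝ}
    (hf : DifferentiableAt ℝ f x) :
    ∃ C, ∀ᶠ v in nhds x, f x - f v ≤ C * |v - x| := by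
  obtain ⟨C, hC⟩ := hf.isBigO_sub.bound
  refine ⟨C, hC.mono fun v hv => ?_⟩
  rw [Real.norm_eq_abs, Real.norm_eq_abs, abs_sub_comm] at hv
  exact (le_abs_self _).trans hv

theorem exists_eventually_sub_le_mul_abs_of_lt_deriv {f : ℝ → ℝ} {a c : ℝ}
    (hf : ContinuousOn f (Set.Ici a)) (hdiff : ∀ t ∈ Set.Ioi a, DifferentiableAt ℝ f t)
    (hderiv : ∀ᶠ t in nhdsWithin a (Set.Ioi a), c < deriv f t) :
    ∃ C, ∀ᶠ v in nhdsWithin a (Set.Ici a), f a - f v ≤ C * |v - a| := by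
  obtain ⟨b, hab, hb⟩ := mem_nhdsGT_iff_exists_Ioo_subset.mp hderiv
  have hmvt := (convex_Ico a b).mul_sub_le_image_sub_of_le_deriv
    (hf.mono Set.Ico_subset_Ici_self)
    (fun t ht => (hdiff t (by rw [interior_Ico] at ht; exact ht.1)).differentiableWithinAt)
    (fun t ht => (hb (by rwa [interior_Ico] at ht)).le)
  refine ⟨|c|, mem_of_superset (Ico_mem_nhdsGE hab) fun v hv => ?_⟩
  have hcv := hmvt a (Set.left_mem_Ico.mpr hab) v hv hv.1
  have hneg := neg_abs_le (c * (v - a))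
  rw [abs_mul] at hneg
  show f a - f v ≤ |c| * |v - a|
  linarith

theorem exists_sub_le_mul_abs_of_eventually {f : ℝ → ℝ} {s : Set ℝ} {x C₀ : ℝ}
    (hf : BddBelow (f '' s)) (hloc : ∀ᶠ v in nhdsWithin x s, f x - f v ≤ C₀ * |v - x|) :
    ∃ C, ∀ v ∈ s, f x - f v ≤ C * |v - x| := by
  obtain ⟨m, hm⟩ := hf
  obtain ⟨ε, hε, hεloc⟩ := Metric.mem_nhdsWithin_iff.mp hloc
  set D := max 0 (f x - m)
  refine ⟨max C₀ (D / ε), fun v hv => ?_⟩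
  have hfar : f x - f v ≤ D := (sub_le_sub_left (hm ⟨v, hv, rfl⟩) _).trans (le_max_right _ _)
  rcases lt_or_ge |v - x| ε with hnear | hfar'
  · exact (hεloc ⟨Metric.mem_ball.mpr hnear, hv⟩).trans
      (mul_le_mul_of_nonneg_right (le_max_left _ _) (abs_nonneg _))
  · calc f x - f v ≤ D := hfar
      _ = D / ε * ε := (div_mul_cancel₀ _ hε.ne').symm
      _ ≤ D / ε * |v - x| := mul_le_mul_of_nonneg_left hfar' (by positivity)
      _ ≤ max C₀ (D / ε) * |v - x| := mul_le_mul_of_nonneg_right (le_max_right _ _) (abs_nonneg _)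

theorem obj_two_half (r : Fin 2 → ℝ) (f : ℝ → ℝ) (s : ℝ) :
    obj 2 r ![1 / 2, 1 / 2] 1 f ![1 - s, s] =
      r 0 * (1 - s) + r 1 * s - (f (2 - 2 * s) + f (2 * s)) / 2 := by
  simp only [obj, Fin.sum_univ_two, Matrix.cons_val_zero, Matrix.cons_val_one]
  rw [show (1 - s) / (1 / 2 : ℝ) = 2 - 2 * s by ring, show s / (1 / 2 : ℝ) = 2 * s by ring]
  ring

theorem eq_of_mem_simplex_two {p : Fin 2 → ℝ} (hp : p ∈ simplex 2) :
    p 1 ∈ Set.Icc (0 : ℝ) 1 ∧ p = ![1 - p 1, p 1] := by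
  obtain ⟨hnonneg, hsum⟩ := hp
  rw [Fin.sum_univ_two] at hsum
  refine ⟨⟨hnonneg 1, by linarith [hnonneg 0]⟩, ?_⟩
  ext i
  fin_cases i <;> simp [← hsum]

theorem obj_le_obj_vertex {f : ℝ → ℝ} {K : ℝ}
    (hK : ∀ s ∈ Set.Icc (0 : ℝ) 1, f 0 + f 2 - f (2 * s) - f (2 - 2 * s) ≤ 2 * K * s) :
    ∀ p ∈ simplex 2, obj 2 ![K, 0] ![1 / 2, 1 / 2] 1 f p ≤
      obj 2 ![K, 0] ![1 / 2, 1 / 2] 1 f ![1, 0] := by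
  intro p hp
  obtain ⟨hs, hp⟩ := eq_of_mem_simplex_two hp
  have hvertex : (![1, 0] : Fin 2 → ℝ) = ![1 - 0, 0] := by simp
  rw [hp, hvertex, obj_two_half, obj_two_half]
  norm_num
  linarith [hK _ hs]

theorem stmt4_general (f : ℝ → ℝ)
    (hf_cont : ContinuousOn f (Set.Ici 0))
    (hf_diff : ∀ t ∈ Set.Ioi (0 : ℝ), DifferentiableAt ℝ f t)
    (L : EReal) (hL : L ≠ ⊥)
    (hlim : Tendsto (fun t : ℝ => ((deriv f t : ℝ) : EReal))
      (nhdsWithin 0 (Set.Ioi 0)) (nhds L)) :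
    ∃ n : ℕ, 2 ≤ n ∧
      ∃ r q : Fin n → ℝ, q ∈ simplex n ∧ (∀ i, 0 < q i) ∧
        ∃ β : ℝ, 0 < β ∧
          ∃ p ∈ simplex n,
            (∀ p' ∈ simplex n, obj n r q β f p' ≤ obj n r q β f p) ∧
            ∃ i : Fin n, p i = 0 := by
  have hbdd : BddBelow (f '' Set.Icc 0 2) :=
    isCompact_Icc.bddBelow_image (hf_cont.mono Set.Icc_subset_Ici_self)
  obtain ⟨c, hc⟩ := EReal.exists_eventually_real_lt_of_tendsto hL hlim
  obtain ⟨A₀, hA₀⟩ := exists_eventually_sub_le_mul_abs_of_lt_deriv hf_cont hf_diff hc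
  obtain ⟨A, hA⟩ := exists_sub_le_mul_abs_of_eventually hbdd
    (hA₀.filter_mono (nhdsWithin_mono _ Set.Icc_subset_Ici_self))
  obtain ⟨B₀, hB₀⟩ := (hf_diff 2 (Set.mem_Ioi.mpr two_pos)).exists_eventually_sub_le_mul_abs
  obtain ⟨B, hB⟩ := exists_sub_le_mul_abs_of_eventually hbdd (hB₀.filter_mono nhdsWithin_le_nhds)
  have hhalf : ∀ i, (0 : ℝ) < ![1 / 2, 1 / 2] i := fun i => by fin_cases i <;> norm_num
  refine ⟨2, le_rfl, ![A + B, 0], ![1 / 2, 1 / 2],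
    ⟨fun i => (hhalf i).le, by norm_num [Fin.sum_univ_two]⟩, hhalf, 1, one_pos,
    ![1, 0], ⟨fun i => by fin_cases i <;> norm_num, by simp [Fin.sum_univ_two]⟩,
    obj_le_obj_vertex fun s hs => ?_, 1, rfl⟩
  have h0 := hA (2 * s) ⟨by linarith [hs.1], by linarith [hs.2]⟩
  have h2 := hB (2 - 2 * s) ⟨by linarith [hs.2], by linarith [hs.1]⟩
  rw [sub_zero, abs_of_nonneg (by linarith [hs.1])] at h0
  rw [show 2 - 2 * s - 2 = -(2 * s) by ring, abs_neg, abs_of_nonneg (by linarith [hs.1])] at h2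
  linarith

/-- if the limit `L = lim_{t→0⁺} f'(t)` exists in the extended reals
and `L ≠ −∞`, then there is an instance (some `n ≥ 2`, `r`, `q` with positive
entries, and `β > 0`) admitting a maximizer of `g` over the simplex with a zero
coordinate. -/
theorem stmt4 (f : ℝ → ℝ)
    (hf_cont : ContinuousOn f (Set.Ici 0))
    (hf_diff : ∀ t ∈ Set.Ioi (0 : ℝ), DifferentiableAt ℝ f t)
    (hf_deriv_cont : ContinuousOn (deriv f) (Set.Ioi 0))
    (L : EReal) (hL : L ≠ ⊥)
    (hlim : Tendsto (fun t : ℝ => ((deriv f t : ℝ) : EReal))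
      (nhdsWithin 0 (Set.Ioi 0)) (nhds L)) :
    ∃ n : ℕ, 2 ≤ n ∧
      ∃ r q : Fin n → ℝ, q ∈ simplex n ∧ (∀ i, 0 < q i) ∧
        ∃ β : ℝ, 0 < β ∧
          ∃ p ∈ simplex n,
            (∀ p' ∈ simplex n, obj n r q β f p' ≤ obj n r q β f p) ∧
            ∃ i : Fin n, p i = 0 :=
  stmt4_general f hf_cont hf_diff L hL hlim
end

section
/- Let f : [0,∞) → ℝ be continuous on [0,∞) and continuously differentiable on (0,∞). Fix n ≥ 1, r ∈ ℝⁿ, q ∈ Δⁿ with qᵢ > 0 for all i, and β > 0, and let p be a maximizer of g(p) = Σᵢ rᵢ pᵢ − β Σᵢ qᵢ f(pᵢ/qᵢ) over Δⁿ satisfying pᵢ > 0 for all i ∈ {1,…,n}. Then for all indices i, j ∈ {1,…,n}, rᵢ − rⱼ = β f'(pᵢ/qᵢ) − β f'(pⱼ/qⱼ). -/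
open Finset

/-!
Moving mass `t` from coordinate `j` to coordinate `i` keeps an interior point of the simplex
inside the simplex for small `|t|`, so `t = 0` is a local maximum of `g` along that line. By
Fermat's rule the directional derivative `Σₖ vₖ (rₖ − β f'(pₖ/qₖ))` with `v = eᵢ − eⱼ` vanishes,
which is the claimed identity.
-/

open Filter Topology

theorem eventually_add_smul_mem_simplex {n : ℕ} {p v : Fin n → ℝ} (hp : p ∈ simplex n)
    (hpos : ∀ i, 0 < p i) (hv : ∑ i, v i = 0) : ∀ᶠ t in 𝓝 (0 : ℝ), p + t • v ∈ simplex n := by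
  have hnonneg : ∀ i, ∀ᶠ t in 𝓝 (0 : ℝ), 0 < p i + t * v i := fun i =>
    continuousAt_const.eventually_lt (by fun_prop) (by simpa using hpos i)
  filter_upwards [eventually_all.2 hnonneg] with t ht
  refine ⟨fun i => by simpa using (ht i).le, ?_⟩
  simp only [Pi.add_apply, Pi.smul_apply, smul_eq_mul, sum_add_distrib, ← mul_sum, hv, hp.2]
  ring

theorem hasDerivAt_perspective_line {f : ℝ → ℝ} {q x v : ℝ} (hq : q ≠ 0)
    (hf : DifferentiableAt ℝ f (x / q)) :
    HasDerivAt (fun t => q * f ((x + t * v) / q)) (v * deriv f (x / q)) 0 := by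
  have hline : HasDerivAt (fun t : ℝ => (x + t * v) / q) (v / q) 0 := by
    simpa using (((hasDerivAt_id (0 : ℝ)).mul_const v).const_add x).div_const q
  have hf' : HasDerivAt f (deriv f (x / q)) ((x + 0 * v) / q) := by
    simpa using hf.hasDerivAt
  exact ((hf'.comp 0 hline).const_mul q).congr_deriv (by field_simp)

theorem hasDerivAt_obj_line {n : ℕ} {r q : Fin n → ℝ} {β : ℝ} {f : ℝ → ℝ} {p v : Fin n → ℝ}
    (hq : ∀ i, q i ≠ 0) (hf : ∀ i, DifferentiableAt ℝ f (p i / q i)) :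
    HasDerivAt (fun t : ℝ => obj n r q β f (p + t • v))
      (∑ i, v i * (r i - β * deriv f (p i / q i))) 0 := by
  have hlin : HasDerivAt (fun t : ℝ => ∑ i, r i * (p i + t * v i)) (∑ i, r i * v i) 0 :=
    HasDerivAt.fun_sum fun i _ => by
      simpa using (((hasDerivAt_id (0 : ℝ)).mul_const (v i)).const_add (p i)).const_mul (r i)
  have hpen := HasDerivAt.fun_sum (u := univ) fun i _ =>
    hasDerivAt_perspective_line (v := v i) (hq i) (hf i)
  refine (hlin.fun_sub (hpen.const_mul β)).congr_deriv ?_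
  rw [mul_sum, ← sum_sub_distrib]
  exact sum_congr rfl fun i _ => by ring

theorem sum_mul_sub_deriv_eq_zero_of_isMaxOn {n : ℕ} {r q : Fin n → ℝ} {β : ℝ} {f : ℝ → ℝ}
    {p v : Fin n → ℝ} (hq : ∀ i, q i ≠ 0) (hf : ∀ i, DifferentiableAt ℝ f (p i / q i))
    (hp : p ∈ simplex n) (hpos : ∀ i, 0 < p i)
    (hmax : IsMaxOn (obj n r q β f) (simplex n) p) (hv : ∑ i, v i = 0) :
    ∑ i, v i * (r i - β * deriv f (p i / q i)) = 0 := by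
  have hloc : IsLocalMax (fun t : ℝ => obj n r q β f (p + t • v)) 0 := by
    filter_upwards [eventually_add_smul_mem_simplex hp hpos hv] with t ht
    simpa using hmax ht
  exact hloc.hasDerivAt_eq_zero (hasDerivAt_obj_line hq hf)

theorem stmt6_general (f : ℝ → ℝ)
    (hf_diff : ∀ t ∈ Set.Ioi (0 : ℝ), DifferentiableAt ℝ f t)
    (n : ℕ) (r q : Fin n → ℝ)
    (hq_pos : ∀ i, 0 < q i)
    (β : ℝ)
    (p : Fin n → ℝ) (hp : p ∈ simplex n)
    (hmax : ∀ p' ∈ simplex n, obj n r q β f p' ≤ obj n r q β f p)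
    (hpos : ∀ i, 0 < p i) :
    ∀ i j : Fin n,
      r i - r j = β * deriv f (p i / q i) - β * deriv f (p j / q j) := by
  intro i j
  have hcrit := sum_mul_sub_deriv_eq_zero_of_isMaxOn (v := Pi.single i 1 - Pi.single j 1)
    (fun k => (hq_pos k).ne') (fun k => hf_diff _ (div_pos (hpos k) (hq_pos k))) hp hpos hmax
    (by simp [sum_sub_distrib])
  simp only [Pi.sub_apply, sub_mul, sum_sub_distrib, Pi.single_apply, ite_mul, one_mul,
    zero_mul, sum_ite_eq', mem_univ, if_true] at hcrit
  linarith

/-- first-order condition underlying the f-DPO loss: at any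
fully-interior maximizer `p` of `g` over the simplex,
`rᵢ − rⱼ = β f'(pᵢ/qᵢ) − β f'(pⱼ/qⱼ)` for all `i, j`. -/
theorem stmt6 (f : ℝ → ℝ)
    (hf_cont : ContinuousOn f (Set.Ici 0))
    (hf_diff : ∀ t ∈ Set.Ioi (0 : ℝ), DifferentiableAt ℝ f t)
    (hf_deriv_cont : ContinuousOn (deriv f) (Set.Ioi 0))
    (n : ℕ) (hn : 1 ≤ n) (r q : Fin n → ℝ)
    (hq : q ∈ simplex n) (hq_pos : ∀ i, 0 < q i)
    (β : ℝ) (hβ : 0 < β)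
    (p : Fin n → ℝ) (hp : p ∈ simplex n)
    (hmax : ∀ p' ∈ simplex n, obj n r q β f p' ≤ obj n r q β f p)
    (hpos : ∀ i, 0 < p i) :
    ∀ i j : Fin n,
      r i - r j = β * deriv f (p i / q i) - β * deriv f (p j / q j) :=
  stmt6_general f hf_diff n r q hq_pos β p hp hmax hpos
end

section
/- Let f : [0,∞) → ℝ be continuous on [0,∞) and continuously differentiable on (0,∞). Fix n ≥ 1, a subset S ⊆ {1,…,n}, r ∈ ℝⁿ, q ∈ Δⁿ with qᵢ > 0 for all i, and β > 0, and define h(p) = Σᵢ rᵢ pᵢ − β Σ_{i∈S} qᵢ f(pᵢ/qᵢ). Let p be a maximizer of h over Δⁿ with pᵢ > 0 for all i ∈ S. Then for all indices i, j ∈ S, rᵢ − rⱼ = β f'(pᵢ/qᵢ) − β f'(pⱼ/qⱼ). In particular, the first-order conditions at maximizers of the partial-sum objective coincide on S with those at fully-interior maximizers of the full objective g(p) = Σᵢ rᵢ pᵢ − β Σᵢ qᵢ f(pᵢ/qᵢ), so both yield the same f-DPO loss upon substitution into the Bradley–Terry model. -/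
open Finset

/-- The partial-sum objective `h(p) = Σᵢ rᵢ pᵢ − β Σ_{i∈S} qᵢ f(pᵢ/qᵢ)`, where
the regularization term runs only over in-sample indices `S`. -/
noncomputable def pobj (n : ℕ) (S : Finset (Fin n)) (r q : Fin n → ℝ) (β : ℝ)
    (f : ℝ → ℝ) (p : Fin n → ℝ) : ℝ :=
  (∑ i, r i * p i) - β * ∑ i ∈ S, q i * f (p i / q i)
/-! Moving mass `t` from coordinate `j` to coordinate `i` keeps `p` in the simplex for
`|t| ≤ min (p i) (p j)`. Along this segment only the coordinates in `S`, where `p` is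
positive, enter `f`, so the objective is differentiable at `t = 0`, where it is maximal;
its derivative `rᵢ − rⱼ − β (f'(pᵢ/qᵢ) − f'(pⱼ/qⱼ))` therefore vanishes. -/

variable {n : ℕ}

lemma sum_mul_single_sub_single {s : Finset (Fin n)} {i j : Fin n} (hi : i ∈ s) (hj : j ∈ s)
    (a : Fin n → ℝ) :
    ∑ k ∈ s, a k * (Pi.single i 1 - Pi.single j 1 : Fin n → ℝ) k = a i - a j := by
  simp [Pi.single_apply, mul_sub, Finset.sum_sub_distrib, hi, hj]

lemma add_smul_single_sub_single_mem_simplex {p : Fin n → ℝ} (hp : p ∈ simplex n)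
    {i j : Fin n} {t : ℝ} (hti : |t| ≤ p i) (htj : |t| ≤ p j) :
    p + t • (Pi.single i 1 - Pi.single j 1) ∈ simplex n := by
  refine ⟨fun k => ?_, ?_⟩
  · obtain ⟨hti₁, hti₂⟩ := abs_le.mp hti
    obtain ⟨htj₁, htj₂⟩ := abs_le.mp htj
    have hpk := hp.1 k
    simp only [Pi.add_apply, Pi.smul_apply, Pi.sub_apply, Pi.single_apply, smul_eq_mul]
    split_ifs <;> subst_vars <;> linarith
  · simp [Finset.sum_add_distrib, ← Finset.mul_sum, Finset.sum_sub_distrib, hp.2]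

lemma hasDerivAt_pobj_add_smul (S : Finset (Fin n)) (r q : Fin n → ℝ) (β : ℝ) (f : ℝ → ℝ)
    {p : Fin n → ℝ} (v : Fin n → ℝ) (hq : ∀ k ∈ S, q k ≠ 0)
    (hf : ∀ k ∈ S, DifferentiableAt ℝ f (p k / q k)) :
    HasDerivAt (fun t : ℝ => pobj n S r q β f (p + t • v))
      ((∑ k, r k * v k) - β * ∑ k ∈ S, deriv f (p k / q k) * v k) 0 := by
  have hline : ∀ k, HasDerivAt (fun t : ℝ => p k + t * v k) (v k) 0 := fun k => by
    simpa using ((hasDerivAt_id (0 : ℝ)).mul_const (v k)).const_add (p k)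
  simp only [pobj, Pi.add_apply, Pi.smul_apply, smul_eq_mul]
  refine (HasDerivAt.fun_sum fun k _ => (hline k).const_mul (r k)).sub
    ((HasDerivAt.fun_sum fun k hk => ?_).const_mul β)
  have hcomp := ((hf k hk).hasDerivAt.comp_of_eq 0 ((hline k).div_const (q k))
    (by simp)).const_mul (q k)
  exact hcomp.congr_deriv (by field_simp [hq k hk])

theorem stmt8_general (f : ℝ → ℝ)
    (hf_diff : ∀ t ∈ Set.Ioi (0 : ℝ), DifferentiableAt ℝ f t)
    (n : ℕ) (S : Finset (Fin n))
    (r q : Fin n → ℝ)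
    (hq_pos : ∀ i, 0 < q i)
    (β : ℝ)
    (p : Fin n → ℝ) (hp : p ∈ simplex n)
    (hmax : ∀ p' ∈ simplex n, pobj n S r q β f p' ≤ pobj n S r q β f p)
    (hpos : ∀ i ∈ S, 0 < p i) :
    ∀ i ∈ S, ∀ j ∈ S,
      r i - r j = β * deriv f (p i / q i) - β * deriv f (p j / q j) := by
  intro i hi j hj
  let v : Fin n → ℝ := Pi.single i 1 - Pi.single j 1
  have hderiv := hasDerivAt_pobj_add_smul S r q β f v (fun k _ => (hq_pos k).ne')
    (fun k hk => hf_diff _ (div_pos (hpos k hk) (hq_pos k)))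
  have hlocal : IsLocalMax (fun t : ℝ => pobj n S r q β f (p + t • v)) 0 := by
    filter_upwards [Metric.ball_mem_nhds 0 (lt_min (hpos i hi) (hpos j hj))] with t ht
    rw [Metric.mem_ball, dist_zero_right, Real.norm_eq_abs, lt_min_iff] at ht
    simpa using hmax _ (add_smul_single_sub_single_mem_simplex hp ht.1.le ht.2.le)
  have hzero := hlocal.hasDerivAt_eq_zero hderiv
  rw [sum_mul_single_sub_single (Finset.mem_univ i) (Finset.mem_univ j),
    sum_mul_single_sub_single hi hj] at hzero
  linear_combination hzero

/-- at any maximizer `p` of the partial-sum objective `h` over the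
simplex which is positive on `S`, the first-order condition
`rᵢ − rⱼ = β f'(pᵢ/qᵢ) − β f'(pⱼ/qⱼ)` holds for all `i, j ∈ S` — the same
condition obtained at fully-interior maximizers of the full objective, so both
yield the same f-DPO loss upon substitution into the Bradley–Terry model. -/
theorem stmt8 (f : ℝ → ℝ)
    (hf_cont : ContinuousOn f (Set.Ici 0))
    (hf_diff : ∀ t ∈ Set.Ioi (0 : ℝ), DifferentiableAt ℝ f t)
    (hf_deriv_cont : ContinuousOn (deriv f) (Set.Ioi 0))
    (n : ℕ) (hn : 1 ≤ n) (S : Finset (Fin n))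
    (r q : Fin n → ℝ)
    (hq : q ∈ simplex n) (hq_pos : ∀ i, 0 < q i)
    (β : ℝ) (hβ : 0 < β)
    (p : Fin n → ℝ) (hp : p ∈ simplex n)
    (hmax : ∀ p' ∈ simplex n, pobj n S r q β f p' ≤ pobj n S r q β f p)
    (hpos : ∀ i ∈ S, 0 < p i) :
    ∀ i ∈ S, ∀ j ∈ S,
      r i - r j = β * deriv f (p i / q i) - β * deriv f (p j / q j) :=
  stmt8_general f hf_diff n S r q hq_pos β p hp hmax hpos
end

section
/- Let f : [0,∞) → ℝ be convex, continuous on [0,∞), and differentiable on (0,∞), and assume f' : (0,∞) → ℝ is a strictly increasing bijection onto ℝ, with inverse (f')⁻¹ : ℝ → (0,∞). Fix n ≥ 2, a strict subset S ⊊ {1,…,n}, r ∈ ℝⁿ, q ∈ Δⁿ with qᵢ > 0 for all i, and β > 0. Set r̂ = max_{i∉S} rᵢ and zᵢ = qᵢ (f')⁻¹((rᵢ − r̂)/β) for i ∈ S, and suppose Σ_{i∈S} zᵢ < 1. Then a vector p ∈ Δⁿ is a maximizer of h(p) = Σᵢ rᵢ pᵢ − β Σ_{i∈S} qᵢ f(pᵢ/qᵢ)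 over Δⁿ if and only if: pᵢ = zᵢ for all i ∈ S; pᵢ = 0 for all i ∉ S with rᵢ < r̂; and Σ_{i∉S, rᵢ = r̂} pᵢ = 1 − Σ_{i∈S} zᵢ. -/
/-!
Up to the constant `r̂`, the objective splits as `Σ_{i∈S} gᵢ(pᵢ) + Σ_{i∉S} (rᵢ - r̂) pᵢ` with
`gᵢ(t) = (rᵢ - r̂) t - β qᵢ f(t / qᵢ)`. Each `gᵢ` is strictly concave on `[0, ∞)` with
`gᵢ'(zᵢ) = 0`, so it has the unique maximizer `zᵢ`, while each out-of-sample term is `≤ 0`, with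
equality iff `pᵢ = 0` or `rᵢ = r̂`. Because `Σ_{i∈S} zᵢ < 1`, the leftover mass can be put on an
out-of-sample index attaining `r̂`, so the termwise bound is attained on `Δⁿ`; the maximizers are
exactly the points attaining it termwise.
-/

open Finset

lemma StrictConvexOn.add_deriv_mul_sub_lt {s : Set ℝ} {f : ℝ → ℝ} (hf : StrictConvexOn ℝ s f)
    {a b : ℝ} (ha : a ∈ s) (hb : b ∈ s) (hab : a ≠ b) (hfb : DifferentiableAt ℝ f b) :
    f b + deriv f b * (a - b) < f a := by
  rcases hab.lt_or_gt with h | h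
  · have hs := hf.slope_lt_deriv ha hb h hfb
    rw [slope_def_field, div_lt_iff₀ (by linarith)] at hs
    linarith
  · have hs := hf.deriv_lt_slope hb ha h hfb
    rw [slope_def_field, lt_div_iff₀ (by linarith)] at hs
    linarith

lemma mul_sub_perspective_lt_of_deriv_eq {f : ℝ → ℝ} (hf : StrictConvexOn ℝ (Set.Ici 0) f)
    {c β q z t : ℝ} (hβ : 0 < β) (hq : 0 < q) (hz : 0 ≤ z)
    (hfz : DifferentiableAt ℝ f (z / q)) (hderiv : deriv f (z / q) = c / β)
    (ht : 0 ≤ t) (htz : t ≠ z) :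
    c * t - β * (q * f (t / q)) < c * z - β * (q * f (z / q)) := by
  have htq : t / q ≠ z / q := fun h => htz ((div_left_inj' hq.ne').1 h)
  have tangent := hf.add_deriv_mul_sub_lt (div_nonneg ht hq.le) (div_nonneg hz hq.le) htq hfz
  rw [hderiv] at tangent
  have hscaled := mul_lt_mul_of_pos_left tangent (mul_pos hβ hq)
  have hlin : β * q * (c / β * (t / q - z / q)) = c * (t - z) := by field_simp
  rw [mul_add, hlin] at hscaled
  linarith

lemma pobj_eq_of_sum_eq_one {n : ℕ} (S : Finset (Fin n)) (r q : Fin n → ℝ) (β : ℝ)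
    (f : ℝ → ℝ) (m : ℝ) {p : Fin n → ℝ} (hp : ∑ i, p i = 1) :
    pobj n S r q β f p = ∑ i ∈ S, ((r i - m) * p i - β * (q i * f (p i / q i)))
      + ∑ i ∈ Sᶜ, (r i - m) * p i + m := by
  have hlin : ∑ i, r i * p i = ∑ i, (r i - m) * p i + m := by
    simp only [sub_mul, sum_sub_distrib, ← mul_sum, hp, mul_one, sub_add_cancel]
  rw [pobj, hlin, ← sum_add_sum_compl S, sum_sub_distrib, mul_sum]
  ring

lemma pobj_le_and_eq_iff {n : ℕ} {S : Finset (Fin n)} {r q : Fin n → ℝ} {β : ℝ}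
    {f : ℝ → ℝ} {m : ℝ} {z : Fin n → ℝ}
    (hz : ∀ i ∈ S, ∀ t, 0 ≤ t → t ≠ z i →
      (r i - m) * t - β * (q i * f (t / q i)) < (r i - m) * z i - β * (q i * f (z i / q i)))
    (hm : ∀ i ∉ S, r i ≤ m) {p : Fin n → ℝ} (hp : p ∈ simplex n) :
    pobj n S r q β f p ≤ ∑ i ∈ S, ((r i - m) * z i - β * (q i * f (z i / q i))) + m ∧
      (pobj n S r q β f p = ∑ i ∈ S, ((r i - m) * z i - β * (q i * f (z i / q i))) + m ↔
        (∀ i ∈ S, p i = z i) ∧ ∀ i ∉ S, r i < m → p i = 0) := by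
  have hin : ∀ i ∈ S, (r i - m) * p i - β * (q i * f (p i / q i)) ≤
      (r i - m) * z i - β * (q i * f (z i / q i)) := fun i hi => by
    rcases eq_or_ne (p i) (z i) with h | h
    · rw [h]
    · exact (hz i hi (p i) (hp.1 i) h).le
  have hout : ∀ i ∈ Sᶜ, (r i - m) * p i ≤ 0 := fun i hi =>
    mul_nonpos_of_nonpos_of_nonneg (sub_nonpos.2 (hm i (mem_compl.1 hi))) (hp.1 i)
  have hdecomp := pobj_eq_of_sum_eq_one S r q β f m hp.2
  refine ⟨by linarith [sum_le_sum hin, sum_nonpos hout], ?_⟩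
  have hsplit : pobj n S r q β f p = ∑ i ∈ S, ((r i - m) * z i - β * (q i * f (z i / q i))) + m ↔
      ∑ i ∈ S, ((r i - m) * p i - β * (q i * f (p i / q i))) =
        ∑ i ∈ S, ((r i - m) * z i - β * (q i * f (z i / q i))) ∧
      ∑ i ∈ Sᶜ, (r i - m) * p i = ∑ i ∈ Sᶜ, (0 : ℝ) := by
    rw [← add_eq_add_iff_eq_and_eq (sum_le_sum hin) (sum_le_sum hout), sum_const_zero, hdecomp]
    constructor <;> intro h <;> linarith
  rw [hsplit, sum_eq_sum_iff_of_le hin, sum_eq_sum_iff_of_le hout]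
  refine and_congr (forall₂_congr fun i hi => ⟨fun h => ?_, fun h => by rw [h]⟩)
    ⟨fun h i hi hlt => ?_, fun h i hi => ?_⟩
  · by_contra hne
    exact (hz i hi (p i) (hp.1 i) hne).ne h
  · simpa [sub_ne_zero.2 hlt.ne] using h i (mem_compl.2 hi)
  · rcases (hm i (mem_compl.1 hi)).lt_or_eq with hlt | heq
    · rw [h i (mem_compl.1 hi) hlt, mul_zero]
    · rw [heq, sub_self, zero_mul]

lemma exists_mem_simplex_eqOn {n : ℕ} {S : Finset (Fin n)} {j : Fin n} (hj : j ∉ S)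
    {z : Fin n → ℝ} (hz : ∀ i ∈ S, 0 ≤ z i) (hsum : ∑ i ∈ S, z i ≤ 1) :
    ∃ p ∈ simplex n, (∀ i ∈ S, p i = z i) ∧ ∀ i ∉ S, i ≠ j → p i = 0 := by
  classical
  refine ⟨fun i => if i ∈ S then z i else Pi.single (M := fun _ => ℝ) j (1 - ∑ i ∈ S, z i) i,
    ⟨fun i => ?_, ?_⟩, fun i hi => if_pos hi, fun i hi hij => by simp [hi, hij]⟩
  · by_cases hi : i ∈ S
    · simpa [hi] using hz i hi
    · simp only [if_neg hi, Pi.single_apply]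
      split_ifs <;> linarith
  · rw [← sum_add_sum_compl S, sum_congr rfl (fun i hi => if_pos hi),
      sum_congr rfl (fun i hi => if_neg (mem_compl.1 hi)), sum_pi_single' j,
      if_pos (mem_compl.2 hj), add_sub_cancel]

lemma sum_compl_filter_eq_one_sub {n : ℕ} {S : Finset (Fin n)} {r z p : Fin n → ℝ} {m : ℝ}
    (hp : p ∈ simplex n) (hpS : ∀ i ∈ S, p i = z i) (hpout : ∀ i ∉ S, r i < m → p i = 0)
    (hm : ∀ i ∉ S, r i ≤ m) :
    ∑ i ∈ Sᶜ.filter (fun i => r i = m), p i = 1 - ∑ i ∈ S, z i := by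
  have hfilter : ∑ i ∈ Sᶜ.filter (fun i => r i = m), p i = ∑ i ∈ Sᶜ, p i :=
    sum_filter_of_ne fun i hi hpi => by
      by_contra hne
      exact hpi (hpout i (mem_compl.1 hi) ((hm i (mem_compl.1 hi)).lt_of_ne hne))
  rw [hfilter, ← sum_congr rfl hpS, eq_sub_iff_add_eq', sum_add_sum_compl, hp.2]

theorem stmt10_general (f : ℝ → ℝ)
    (hf_cont : ContinuousOn f (Set.Ici 0))
    (hf_diff : ∀ t ∈ Set.Ioi (0 : ℝ), DifferentiableAt ℝ f t)
    (hmono : StrictMonoOn (deriv f) (Set.Ioi 0))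
    (finv : ℝ → ℝ)
    (hfinv_pos : ∀ y : ℝ, 0 < finv y)
    (hfinv_right : ∀ y : ℝ, deriv f (finv y) = y)
    (n : ℕ) (S : Finset (Fin n))
    (hSc : (Sᶜ : Finset (Fin n)).Nonempty)
    (r q : Fin n → ℝ)
    (hq_pos : ∀ i, 0 < q i)
    (β : ℝ) (hβ : 0 < β)
    (hz : ∑ i ∈ S, q i * finv ((r i - (Sᶜ : Finset (Fin n)).sup' hSc r) / β) < 1)
    (p : Fin n → ℝ) (hp : p ∈ simplex n) :
    (∀ p' ∈ simplex n, pobj n S r q β f p' ≤ pobj n S r q β f p) ↔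
      ((∀ i ∈ S, p i = q i * finv ((r i - (Sᶜ : Finset (Fin n)).sup' hSc r) / β)) ∧
       (∀ i ∉ S, r i < (Sᶜ : Finset (Fin n)).sup' hSc r → p i = 0) ∧
       ∑ i ∈ Sᶜ.filter (fun i => r i = (Sᶜ : Finset (Fin n)).sup' hSc r), p i
         = 1 - ∑ i ∈ S, q i * finv ((r i - (Sᶜ : Finset (Fin n)).sup' hSc r) / β)) := by
  set m := (Sᶜ : Finset (Fin n)).sup' hSc r
  set z : Fin n → ℝ := fun i => q i * finv ((r i - m) / β)
  have hzq : ∀ i, z i / q i = finv ((r i - m) / β) := fun i =>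
    mul_div_cancel_left₀ _ (hq_pos i).ne'
  have hf : StrictConvexOn ℝ (Set.Ici 0) f :=
    StrictMonoOn.strictConvexOn_of_deriv (convex_Ici 0) hf_cont (by rwa [interior_Ici])
  have hm : ∀ i ∉ S, r i ≤ m := fun i hi => le_sup' r (mem_compl.2 hi)
  have hz_pos : ∀ i, 0 < z i := fun i => mul_pos (hq_pos i) (hfinv_pos _)
  have hzmax : ∀ i ∈ S, ∀ t, 0 ≤ t → t ≠ z i →
      (r i - m) * t - β * (q i * f (t / q i)) < (r i - m) * z i - β * (q i * f (z i / q i)) :=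
    fun i _ t ht htz => mul_sub_perspective_lt_of_deriv_eq hf hβ (hq_pos i) (hz_pos i).le
      (hf_diff _ (hzq i ▸ hfinv_pos _)) (by rw [hzq, hfinv_right]) ht htz
  have hbound := fun {p} (hp : p ∈ simplex n) => pobj_le_and_eq_iff hzmax hm hp
  obtain ⟨j, hjS, hjm⟩ := exists_mem_eq_sup' hSc r
  obtain ⟨p₀, hp₀, hp₀S, hp₀out⟩ := exists_mem_simplex_eqOn (mem_compl.1 hjS)
    (fun i _ => (hz_pos i).le) hz.le
  have hp₀val := (hbound hp₀).2.2 ⟨hp₀S, fun i hi hlt => hp₀out i hi (by rintro rfl; linarith)⟩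
  constructor
  · intro hmax
    obtain ⟨hpS, hpout⟩ := (hbound hp).2.1 (le_antisymm (hbound hp).1 (hp₀val ▸ hmax p₀ hp₀))
    exact ⟨hpS, hpout, sum_compl_filter_eq_one_sub hp hpS hpout hm⟩
  · rintro ⟨hpS, hpout, -⟩ p' hp'
    rw [(hbound hp).2.2 ⟨hpS, hpout⟩]
    exact (hbound hp').1

/-- optimal solutions of the partial-sum problem, first case:
for convex `f` whose derivative is a strictly increasing bijection from `(0,∞)`
onto `ℝ` with inverse `finv`, setting `r̂ = max_{i∉S} rᵢ` and
`zᵢ = qᵢ (f')⁻¹((rᵢ − r̂)/β)`, if `Σ_{i∈S} zᵢ < 1` then `p ∈ Δⁿ` maximizes `h`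
iff `pᵢ = zᵢ` on `S`, `pᵢ = 0` for out-of-sample `i` with `rᵢ < r̂`, and the mass
on out-of-sample indices attaining `r̂` is `1 − Σ_{i∈S} zᵢ`. -/
theorem stmt10 (f : ℝ → ℝ)
    (hconv : ConvexOn ℝ (Set.Ici 0) f)
    (hf_cont : ContinuousOn f (Set.Ici 0))
    (hf_diff : ∀ t ∈ Set.Ioi (0 : ℝ), DifferentiableAt ℝ f t)
    (hmono : StrictMonoOn (deriv f) (Set.Ioi 0))
    (finv : ℝ → ℝ)
    (hfinv_pos : ∀ y : ℝ, 0 < finv y)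
    (hfinv_right : ∀ y : ℝ, deriv f (finv y) = y)
    (hfinv_left : ∀ t : ℝ, 0 < t → finv (deriv f t) = t)
    (n : ℕ) (hn : 2 ≤ n) (S : Finset (Fin n)) (hS : S ⊂ Finset.univ)
    (hSc : (Sᶜ : Finset (Fin n)).Nonempty)
    (r q : Fin n → ℝ)
    (hq : q ∈ simplex n) (hq_pos : ∀ i, 0 < q i)
    (β : ℝ) (hβ : 0 < β)
    (hz : ∑ i ∈ S, q i * finv ((r i - (Sᶜ : Finset (Fin n)).sup' hSc r) / β) < 1)
    (p : Fin n → ℝ) (hp : p ∈ simplex n) :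
    (∀ p' ∈ simplex n, pobj n S r q β f p' ≤ pobj n S r q β f p) ↔
      ((∀ i ∈ S, p i = q i * finv ((r i - (Sᶜ : Finset (Fin n)).sup' hSc r) / β)) ∧
       (∀ i ∉ S, r i < (Sᶜ : Finset (Fin n)).sup' hSc r → p i = 0) ∧
       ∑ i ∈ Sᶜ.filter (fun i => r i = (Sᶜ : Finset (Fin n)).sup' hSc r), p i
         = 1 - ∑ i ∈ S, q i * finv ((r i - (Sᶜ : Finset (Fin n)).sup' hSc r) / β)) :=
  stmt10_general f hf_cont hf_diff hmono finv hfinv_pos hfinv_right n S hSc r q hq_pos β hβ hz p hp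
end

section
/- The function f(t) = (1/2)(log t)² on (0,∞) satisfies: (i) f'(t) = (log t)/t for all t > 0, and lim_{t→0⁺} f'(t) = −∞; (ii) t = 1 is the unique global minimizer of f on (0,∞), with f(1) = 0 and f(t) > 0 for all t > 0 with t ≠ 1; (iii) f is not convex on (0,∞). Hence f is both DPO-inducing (lim_{t→0⁺} f'(t) = −∞) and displacement-resistant (its global minimizer is ≥ 1), yet non-convex. -/
open Filter Topology

/-! `log t / t = log t · t⁻¹` tends to `-∞` at `0⁺`, a product of factors tending to `-∞` and `+∞`.
Convexity fails on the chord from `1` to `32 = 2⁵`: at `2 = (30/31)·1 + (1/31)·32` the function has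
value `(log 2)² / 2`, above the chord value `(1/31)·(5 log 2)² / 2 = (25/62)(log 2)²`. -/

namespace Real

theorem hasDerivAt_log_sq_div_two {t : ℝ} (ht : t ≠ 0) :
    HasDerivAt (fun s : ℝ => log s ^ 2 / 2) (log t / t) t := by
  refine (((hasDerivAt_log ht).fun_pow 2).div_const 2).congr_deriv ?_
  push_cast
  ring

theorem tendsto_log_div_self_nhdsGT_zero :
    Tendsto (fun t : ℝ => log t / t) (𝓝[>] 0) atBot := by
  simpa only [div_eq_mul_inv] using tendsto_log_nhdsGT_zero.atBot_mul_atTop₀ tendsto_inv_nhdsGT_zero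

theorem log_sq_div_two_pos {t : ℝ} (ht : 0 < t) (ht₁ : t ≠ 1) : 0 < log t ^ 2 / 2 := by
  have := log_ne_zero_of_pos_of_ne_one ht ht₁
  positivity

theorem not_convexOn_log_sq_div_two :
    ¬ ConvexOn ℝ (Set.Ioi 0) (fun t : ℝ => log t ^ 2 / 2) := by
  intro hconv
  have hchord := hconv.2 (Set.mem_Ioi.2 one_pos) (Set.mem_Ioi.2 (by norm_num : (0 : ℝ) < 32))
    (by norm_num : (0 : ℝ) ≤ 30 / 31) (by norm_num : (0 : ℝ) ≤ 1 / 31) (by norm_num)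
  have hmid : (30 / 31 : ℝ) • (1 : ℝ) + (1 / 31 : ℝ) • (32 : ℝ) = 2 := by norm_num
  have hlog32 : log 32 = 5 * log 2 := by
    rw [show (32 : ℝ) = 2 ^ 5 by norm_num, log_pow]
    norm_num
  rw [hmid] at hchord
  simp only [smul_eq_mul, log_one, hlog32] at hchord
  have hlog2 : 0 < log 2 := log_pos one_lt_two
  nlinarith

end Real

/-- the function `f(t) = (1/2)(log t)²` satisfies:
(i) `f'(t) = (log t)/t` for `t > 0` and `lim_{t→0⁺} f'(t) = −∞` (DPO-inducing);
(ii) `t = 1` is its unique global minimizer on `(0,∞)`, with `f(1) = 0` and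
`f(t) > 0` for `t > 0`, `t ≠ 1` (displacement-resistant);
(iii) `f` is not convex on `(0,∞)`. -/
theorem stmt12 :
    (∀ t : ℝ, 0 < t →
      HasDerivAt (fun s : ℝ => (Real.log s) ^ 2 / 2) (Real.log t / t) t) ∧
    Tendsto (fun t : ℝ => Real.log t / t) (nhdsWithin 0 (Set.Ioi 0)) atBot ∧
    ((Real.log 1) ^ 2 / 2 = 0) ∧
    (∀ t : ℝ, 0 < t → t ≠ 1 → 0 < (Real.log t) ^ 2 / 2) ∧
    ¬ ConvexOn ℝ (Set.Ioi 0) (fun t : ℝ => (Real.log t) ^ 2 / 2) :=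
  ⟨fun _ ht => Real.hasDerivAt_log_sq_div_two ht.ne', Real.tendsto_log_div_self_nhdsGT_zero,
    by simp, fun _ => Real.log_sq_div_two_pos, Real.not_convexOn_log_sq_div_two⟩
end
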